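/- arXiv:2107.12315 — 2 statements merged into one kernel-verified Lean document; each statement's English description precedes it below -/
import Mathlib

section
/- Let B be a maximal bipartite subgraph of a connected graph G with bipartition V(B) = V_+ ∪ V_-. Define α ∈ ℝ^N by α_i = +1/2 if i ∈ V_+, α_i = −1/2 if i ∈ V_-, and α_i = 0 otherwise. Then ⟨e_i − e_j, α⟩ ≥ −1 for every vertex ±(e_i−e_j) of ∇_G, with equality exactly on the set F = {e_i − e_j : i ∈ V_-, j ∈ V_+, {i,j} ∈ E(B)}; hence F is a face of ∇_G with G_F = B. -/
noncomputable def stdBasis {N : ℕ} (i : Fin N) : Fin N → ℝ := Pi.single i 1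

def nabla {N : ℕ} (G : SimpleGraph (Fin N)) : Set (Fin N → ℝ) :=
  {x | ∃ i j, G.Adj i j ∧ x = stdBasis i - stdBasis j}

noncomputable def inn {N : ℕ} (x α : Fin N → ℝ) : ℝ := ∑ i, x i * α i

def IsFace {N : ℕ} (G : SimpleGraph (Fin N)) (F : Set (Fin N → ℝ)) : Prop :=
  ∃ α : Fin N → ℝ, (∀ x ∈ nabla G, -1 ≤ inn x α) ∧
    F = {x | x ∈ nabla G ∧ inn x α = -1}

def IsFacet {N : ℕ} (G : SimpleGraph (Fin N)) (F : Set (Fin N → ℝ)) : Prop :=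
  IsFace G F ∧ Module.finrank ℝ (vectorSpan ℝ F) = N - 2

def faceGraph {N : ℕ} (F : Set (Fin N → ℝ)) : SimpleGraph (Fin N) :=
  SimpleGraph.fromRel (fun i j => stdBasis i - stdBasis j ∈ F)

def MaxBipartiteSubgraph {N : ℕ} (G H : SimpleGraph (Fin N)) : Prop :=
  H ≤ G ∧ H.Colorable 2 ∧ ∀ H', H' ≤ G → H'.Colorable 2 → H ≤ H' → H' = H

def inducedOn {N : ℕ} (G : SimpleGraph (Fin N)) (s : Set (Fin N)) : SimpleGraph (Fin N) where
  Adj i j := G.Adj i j ∧ i ∈ s ∧ j ∈ s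
  symm := by constructor; intro i j h; exact ⟨h.1.symm, h.2.2, h.2.1⟩
  loopless := by constructor; intro i h; exact G.irrefl h.1

/-! Since `α` takes values in `[-1/2, 1/2]`, `α i - α j ≥ -1`, with equality only for `i ∈ V₋`,
`j ∈ V₊`. Such a pair is an edge of `G` between the two colour classes of `B`; adding it to `B`
keeps `B` bipartite, so by maximality it already is an edge of `B`. -/

lemma inn_stdBasis_sub {N : ℕ} (i j : Fin N) (α : Fin N → ℝ) :
    inn (stdBasis i - stdBasis j) α = α i - α j := by
  simp [inn, stdBasis, sub_mul, Finset.sum_sub_distrib, Pi.single_apply]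

lemma eq_and_eq_of_stdBasis_sub_eq {N : ℕ} {i j a b : Fin N} (hij : i ≠ j)
    (h : stdBasis i - stdBasis j = stdBasis a - stdBasis b) : i = a ∧ j = b := by
  have hi := congrFun h i
  have hj := congrFun h j
  simp only [stdBasis, Pi.sub_apply, Pi.single_apply, if_neg hij, if_neg hij.symm] at hi hj
  constructor
  · by_contra hia
    rw [if_neg hia] at hi
    split_ifs at hi <;> norm_num at hi
  · by_contra hjb
    rw [if_neg hjb] at hj
    split_ifs at hj <;> norm_num at hj

lemma SimpleGraph.colorable_two_of_adj_imp_mem_iff_not_mem {V : Type*} {H : SimpleGraph V}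
    (S : Set V) (hS : ∀ u v, H.Adj u v → (u ∈ S ↔ v ∉ S)) : H.Colorable 2 := by
  classical
  refine ⟨SimpleGraph.Coloring.mk (fun v => if v ∈ S then 0 else 1) fun {u v} huv => ?_⟩
  have := hS u v huv
  by_cases hu : u ∈ S <;> simp_all

lemma MaxBipartiteSubgraph.adj_of_mem_of_mem {N : ℕ} {G B : SimpleGraph (Fin N)}
    (hB : MaxBipartiteSubgraph G B) {Vp Vm : Set (Fin N)} (hdisj : Disjoint Vp Vm)
    (hbip : ∀ i j, B.Adj i j → (i ∈ Vp ∧ j ∈ Vm) ∨ (i ∈ Vm ∧ j ∈ Vp))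
    {i j : Fin N} (hadj : G.Adj i j) (hi : i ∈ Vm) (hj : j ∈ Vp) : B.Adj i j := by
  have hle : B ⊔ SimpleGraph.edge i j ≤ G :=
    sup_le hB.1 ((SimpleGraph.edge_le_iff _).mpr (Or.inr hadj))
  have hcol : (B ⊔ SimpleGraph.edge i j).Colorable 2 := by
    refine SimpleGraph.colorable_two_of_adj_imp_mem_iff_not_mem Vp fun u v huv => ?_
    rcases huv with huv | huv
    · rcases hbip u v huv with ⟨hu, hv⟩ | ⟨hu, hv⟩
      · exact iff_of_true hu (hdisj.notMem_of_mem_right hv)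
      · exact iff_of_false (hdisj.notMem_of_mem_right hu) (not_not.mpr hv)
    · rcases (SimpleGraph.edge_adj i j u v).mp huv with ⟨⟨rfl, rfl⟩ | ⟨rfl, rfl⟩, -⟩
      · exact iff_of_false (hdisj.notMem_of_mem_right hi) (not_not.mpr hj)
      · exact iff_of_true hj (hdisj.notMem_of_mem_right hi)
  rw [← hB.2.2 _ hle hcol le_sup_left]
  exact Or.inr ((SimpleGraph.edge_adj i j i j).mpr ⟨Or.inl ⟨rfl, rfl⟩, hadj.ne⟩)

section HalfSign

variable {N : ℕ} {Vp Vm : Set (Fin N)} {α : Fin N → ℝ}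

lemma half_sign_cases
    (hα : ∀ i, (i ∈ Vp → α i = 1/2) ∧ (i ∈ Vm → α i = -(1/2)) ∧ (i ∉ Vp ∪ Vm → α i = 0))
    (i : Fin N) : (i ∈ Vp ∧ α i = 1/2) ∨ (i ∈ Vm ∧ α i = -(1/2)) ∨ α i = 0 := by
  by_cases hp : i ∈ Vp
  · exact Or.inl ⟨hp, (hα i).1 hp⟩
  by_cases hm : i ∈ Vm
  · exact Or.inr (Or.inl ⟨hm, (hα i).2.1 hm⟩)
  · exact Or.inr (Or.inr ((hα i).2.2 (by simp [hp, hm])))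

lemma neg_one_le_sub_of_half_sign
    (hα : ∀ i, (i ∈ Vp → α i = 1/2) ∧ (i ∈ Vm → α i = -(1/2)) ∧ (i ∉ Vp ∪ Vm → α i = 0))
    (i j : Fin N) : -1 ≤ α i - α j := by
  rcases half_sign_cases hα i with ⟨-, hi⟩ | ⟨-, hi⟩ | hi <;>
    rcases half_sign_cases hα j with ⟨-, hj⟩ | ⟨-, hj⟩ | hj <;>
    · rw [hi, hj]; norm_num

lemma sub_eq_neg_one_iff_of_half_sign
    (hα : ∀ i, (i ∈ Vp → α i = 1/2) ∧ (i ∈ Vm → α i = -(1/2)) ∧ (i ∉ Vp ∪ Vm → α i = 0))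
    (i j : Fin N) : α i - α j = -1 ↔ i ∈ Vm ∧ j ∈ Vp := by
  refine ⟨fun h => ?_, fun ⟨hi, hj⟩ => by rw [(hα i).2.1 hi, (hα j).1 hj]; norm_num⟩
  rcases half_sign_cases hα i with ⟨-, hi⟩ | ⟨hm, hi⟩ | hi <;>
    rcases half_sign_cases hα j with ⟨hp, hj⟩ | ⟨-, hj⟩ | hj <;>
    first
    | exact ⟨hm, hp⟩
    | (rw [hi, hj] at h; norm_num at h)

end HalfSign

lemma faceGraph_eq_of_bipartition {N : ℕ} {B : SimpleGraph (Fin N)} {Vp Vm : Set (Fin N)}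
    (hbip : ∀ i j, B.Adj i j → (i ∈ Vp ∧ j ∈ Vm) ∨ (i ∈ Vm ∧ j ∈ Vp)) :
    faceGraph {x | ∃ i j, i ∈ Vm ∧ j ∈ Vp ∧ B.Adj i j ∧ x = stdBasis i - stdBasis j} = B := by
  ext i j
  simp only [faceGraph, SimpleGraph.fromRel_adj]
  constructor
  · rintro ⟨hij, ⟨a, b, -, -, hadj, heq⟩ | ⟨a, b, -, -, hadj, heq⟩⟩
    · obtain ⟨rfl, rfl⟩ := eq_and_eq_of_stdBasis_sub_eq hij heq
      exact hadj
    · obtain ⟨rfl, rfl⟩ := eq_and_eq_of_stdBasis_sub_eq hij.symm heq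
      exact hadj.symm
  · intro hadj
    refine ⟨hadj.ne, ?_⟩
    rcases hbip i j hadj with ⟨hi, hj⟩ | ⟨hi, hj⟩
    · exact Or.inr ⟨j, i, hj, hi, hadj.symm, rfl⟩
    · exact Or.inl ⟨i, j, hi, hj, hadj, rfl⟩

theorem stmt8_general {N : ℕ} (G : SimpleGraph (Fin N))
    (B : SimpleGraph (Fin N)) (hB : MaxBipartiteSubgraph G B)
    (Vp Vm : Set (Fin N)) (hdisj : Disjoint Vp Vm)
    (hbip : ∀ i j, B.Adj i j → (i ∈ Vp ∧ j ∈ Vm) ∨ (i ∈ Vm ∧ j ∈ Vp)) :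
    ∀ α : Fin N → ℝ,
      (∀ i, (i ∈ Vp → α i = 1/2) ∧ (i ∈ Vm → α i = -(1/2)) ∧
        (i ∉ Vp ∪ Vm → α i = 0)) →
    ∀ F : Set (Fin N → ℝ),
      (F = {x | ∃ i j, i ∈ Vm ∧ j ∈ Vp ∧ B.Adj i j ∧ x = stdBasis i - stdBasis j}) →
    (∀ x ∈ nabla G, -1 ≤ inn x α) ∧
    {x | x ∈ nabla G ∧ inn x α = -1} = F ∧
    IsFace G F ∧ faceGraph F = B := by
  rintro α hα F rfl
  have hlower : ∀ x ∈ nabla G, -1 ≤ inn x α := by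
    rintro x ⟨i, j, -, rfl⟩
    rw [inn_stdBasis_sub]
    exact neg_one_le_sub_of_half_sign hα i j
  have hface : {x | x ∈ nabla G ∧ inn x α = -1} =
      {x | ∃ i j, i ∈ Vm ∧ j ∈ Vp ∧ B.Adj i j ∧ x = stdBasis i - stdBasis j} := by
    ext x
    simp only [Set.mem_ofPred_eq]
    constructor
    · rintro ⟨⟨i, j, hadj, rfl⟩, h⟩
      rw [inn_stdBasis_sub, sub_eq_neg_one_iff_of_half_sign hα] at h
      exact ⟨i, j, h.1, h.2, hB.adj_of_mem_of_mem hdisj hbip hadj h.1 h.2, rfl⟩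
    · rintro ⟨i, j, hi, hj, hadj, rfl⟩
      rw [inn_stdBasis_sub, sub_eq_neg_one_iff_of_half_sign hα]
      exact ⟨⟨i, j, hB.1 hadj, rfl⟩, hi, hj⟩
  exact ⟨hlower, hface, ⟨α, hlower, hface.symm⟩, faceGraph_eq_of_bipartition hbip⟩

theorem stmt8 {N : ℕ} (G : SimpleGraph (Fin N)) (hG : G.Connected)
    (B : SimpleGraph (Fin N)) (hB : MaxBipartiteSubgraph G B)
    (Vp Vm : Set (Fin N)) (hdisj : Disjoint Vp Vm)
    (hsupp : B.support = Vp ∪ Vm)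
    (hbip : ∀ i j, B.Adj i j → (i ∈ Vp ∧ j ∈ Vm) ∨ (i ∈ Vm ∧ j ∈ Vp)) :
    ∀ α : Fin N → ℝ,
      (∀ i, (i ∈ Vp → α i = 1/2) ∧ (i ∈ Vm → α i = -(1/2)) ∧
        (i ∉ Vp ∪ Vm → α i = 0)) →
    ∀ F : Set (Fin N → ℝ),
      (F = {x | ∃ i j, i ∈ Vm ∧ j ∈ Vp ∧ B.Adj i j ∧ x = stdBasis i - stdBasis j}) →
    (∀ x ∈ nabla G, -1 ≤ inn x α) ∧
    {x | x ∈ nabla G ∧ inn x α = -1} = F ∧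
    IsFace G F ∧ faceGraph F = B :=
  stmt8_general G B hB Vp Vm hdisj hbip
end

section
/- For a connected graph G on N vertices and any facet F of ∇_G, the number of facets F' of ∇_G with the same (undirected) facet subgraph as F, i.e. G_{F'} = G_F, is at most 2^{N−1}. -/
/-!
A facet `F` is cut out by a functional `α` with `α i - α j = -1` on its edges `e_i - e_j`.
If its face graph were disconnected, `F` would satisfy a third independent linear condition
(the sum of coordinates over one component vanishes), forcing `dim F ≤ N - 3`; so the face graph
`H` is connected. Any facet `F'` with face graph `H` has `α' a - α' b = ±1` on every edge of `H`,
the sign being fixed by which orientation of the edge lies in `F'`. Hence `α'` is determined up to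
an additive constant, and `F'` itself, by the orientations it picks on a spanning tree of `H`,
which has `N - 1` edges.
-/

theorem finrank_vectorSpan_add_finrank_le {k V W : Type*} [Field k] [AddCommGroup V] [Module k V]
    [FiniteDimensional k V] [AddCommGroup W] [Module k W] (L : V →ₗ[k] W)
    (hL : Function.Surjective L) {s : Set V} (hs : ∀ x ∈ s, ∀ y ∈ s, L x = L y) :
    Module.finrank k (vectorSpan k s) + Module.finrank k W ≤ Module.finrank k V := by
  have hker : vectorSpan k s ≤ LinearMap.ker L := by
    rw [vectorSpan_def, Submodule.span_le]
    rintro _ ⟨x, hx, y, hy, rfl⟩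
    simp [hs x hx y hy]
  have := L.finrank_range_add_finrank_ker
  rw [LinearMap.range_eq_top.mpr hL, finrank_top] at this
  have := Submodule.finrank_mono hker
  omega

theorem SimpleGraph.Preconnected.apply_eq_of_forall_adj {V β : Type*} {G : SimpleGraph V}
    (hG : G.Preconnected) {f : V → β} (hf : ∀ a b, G.Adj a b → f a = f b) (u v : V) :
    f u = f v := by
  obtain ⟨p⟩ := hG u v
  induction p with
  | nil => rfl
  | cons hadj _ ih => exact (hf _ _ hadj).trans ih

variable {N : ℕ}

theorem inn_stdBasis_sub_stdBasis (i j : Fin N) (α : Fin N → ℝ) :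
    inn (stdBasis i - stdBasis j) α = α i - α j := by
  simp [inn, stdBasis, Pi.single_apply, sub_mul, Finset.sum_sub_distrib]

theorem IsFace.subset_nabla {G : SimpleGraph (Fin N)} {F : Set (Fin N → ℝ)} (hF : IsFace G F) :
    F ⊆ nabla G := by
  obtain ⟨α, -, rfl⟩ := hF
  exact fun x hx => hx.1

theorem faceGraph_eq_bot_iff {G : SimpleGraph (Fin N)} {F : Set (Fin N → ℝ)}
    (hF : F ⊆ nabla G) :
    faceGraph F = ⊥ ↔ F = ∅ := by
  refine ⟨fun h => Set.eq_empty_of_forall_notMem fun x hx => ?_, fun h => ?_⟩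
  · obtain ⟨i, j, hij, rfl⟩ := hF hx
    have : (faceGraph F).Adj i j := (SimpleGraph.fromRel_adj _ _ _).2 ⟨hij.ne, .inl hx⟩
    simp [h] at this
  · ext i j
    simp [faceGraph, h]

theorem setOf_inn_eq_neg_one_congr {G : SimpleGraph (Fin N)} {α β : Fin N → ℝ}
    (h : ∀ a b, α a - α b = β a - β b) :
    {x | x ∈ nabla G ∧ inn x α = -1} = {x | x ∈ nabla G ∧ inn x β = -1} := by
  ext x
  refine and_congr_right fun ⟨a, b, _, hx⟩ => ?_
  rw [hx, inn_stdBasis_sub_stdBasis, inn_stdBasis_sub_stdBasis, h]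

open Classical in
theorem sub_eq_ite_of_faceGraph_adj {G : SimpleGraph (Fin N)} {α : Fin N → ℝ}
    {F : Set (Fin N → ℝ)} (hF : F = {x | x ∈ nabla G ∧ inn x α = -1}) {a b : Fin N}
    (hab : (faceGraph F).Adj a b) :
    α a - α b = if stdBasis a - stdBasis b ∈ F then -1 else 1 := by
  have hmem : ∀ i j, stdBasis i - stdBasis j ∈ F → α i - α j = -1 := fun i j h => by
    rw [hF] at h
    simpa only [inn_stdBasis_sub_stdBasis] using h.2
  split_ifs with h
  · exact hmem a b h
  · have := hmem b a (((SimpleGraph.fromRel_adj _ _ _).1 hab).2.resolve_left h)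
    linarith

theorem IsFace.eq_of_forall_out_mem_iff {G T : SimpleGraph (Fin N)}
    {F₁ F₂ : Set (Fin N → ℝ)}
    (h₁ : IsFace G F₁) (h₂ : IsFace G F₂) (hgraph : faceGraph F₁ = faceGraph F₂)
    (hT : T.Preconnected) (hTle : T ≤ faceGraph F₁)
    (horient : ∀ e ∈ T.edgeSet, stdBasis e.out.1 - stdBasis e.out.2 ∈ F₁ ↔
      stdBasis e.out.1 - stdBasis e.out.2 ∈ F₂) :
    F₁ = F₂ := by
  obtain ⟨α₁, -, hF₁⟩ := h₁
  obtain ⟨α₂, -, hF₂⟩ := h₂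
  have hout : ∀ e ∈ T.edgeSet, (α₁ - α₂) e.out.1 = (α₁ - α₂) e.out.2 := by
    intro e he
    have hadj : T.Adj e.out.1 e.out.2 := by rwa [← SimpleGraph.mem_edgeSet, Sym2.mk, e.out_eq]
    have e₁ := sub_eq_ite_of_faceGraph_adj hF₁ (hTle hadj)
    have e₂ := sub_eq_ite_of_faceGraph_adj hF₂ (hgraph ▸ hTle hadj)
    simp only [Pi.sub_apply]
    by_cases hm : stdBasis e.out.1 - stdBasis e.out.2 ∈ F₁
    · rw [if_pos hm] at e₁
      rw [if_pos ((horient e he).1 hm)] at e₂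
      linarith
    · rw [if_neg hm] at e₁
      rw [if_neg (mt (horient e he).2 hm)] at e₂
      linarith
  have hconst := hT.apply_eq_of_forall_adj (f := α₁ - α₂) fun a b hab => by
    have hab' := hout s(a, b) hab
    rcases Sym2.eq_iff.1 (show s((s(a, b)).out.1, (s(a, b)).out.2) = s(a, b) from Quot.out_eq _)
      with ⟨ha, hb⟩ | ⟨ha, hb⟩ <;> rw [ha, hb] at hab'
    exacts [hab', hab'.symm]
  rw [hF₁, hF₂]
  refine setOf_inn_eq_neg_one_congr fun a b => ?_
  have := hconst a b
  simp only [Pi.sub_apply] at this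
  linarith

theorem IsFacet.faceGraph_preconnected {G : SimpleGraph (Fin N)} {F : Set (Fin N → ℝ)}
    (hF : IsFacet G F) (hne : F.Nonempty) : (faceGraph F).Preconnected := by
  classical
  obtain ⟨⟨α, -, hFα⟩, hrank⟩ := hF
  obtain ⟨x₀, hx₀⟩ := hne
  intro v w
  by_contra hvw
  -- `L x` = (sum of all `x i`, `inn x α`, sum of the `x i` with `i` reachable from `v`)
  -- is constantly `(0, -1, 0)` on `F` and maps onto `ℝ³`, so `dim F ≤ N - 3`.
  let c : Fin N → ℝ := fun i => if (faceGraph F).Reachable v i then 1 else 0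
  let L : (Fin N → ℝ) →ₗ[ℝ] (Fin 3 → ℝ) := Matrix.mulVecLin (Matrix.of ![1, α, c])
  have hLe : ∀ i, L (stdBasis i) = ![1, α i, c i] := fun i => by
    ext k; fin_cases k <;> simp [L, stdBasis]
  have hLF : ∀ x ∈ F, L x = ![0, -1, 0] := by
    intro x hx
    obtain ⟨⟨a, b, hab, rfl⟩, hinn⟩ : x ∈ nabla G ∧ inn x α = -1 :=
      (Set.ext_iff.1 hFα x).1 hx
    have hadj : (faceGraph F).Adj a b := (SimpleGraph.fromRel_adj _ _ _).2 ⟨hab.ne, .inl hx⟩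
    have hc : c a = c b := by
      simp only [c]
      exact if_congr ⟨fun h => h.trans hadj.reachable, fun h => h.trans hadj.symm.reachable⟩
        rfl rfl
    rw [inn_stdBasis_sub_stdBasis] at hinn
    rw [map_sub, hLe, hLe]
    ext k; fin_cases k <;> simp [hinn, hc]
  have hsurj : Function.Surjective L := fun y => by
    refine ⟨(y 0 - y 2) • stdBasis w + y 2 • stdBasis v +
      (α w * (y 0 - y 2) + α v * y 2 - y 1) • x₀, ?_⟩
    have hcv : c v = 1 := if_pos (.refl v)
    have hcw : c w = 0 := if_neg hvw
    rw [map_add, map_add, map_smul, map_smul, map_smul, hLe, hLe, hLF x₀ hx₀, hcv, hcw]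
    ext k
    fin_cases k <;> simp
    ring
  have := finrank_vectorSpan_add_finrank_le L hsurj
    fun x hx y hy => (hLF x hx).trans (hLF y hy).symm
  rw [hrank, Module.finrank_fin_fun, Module.finrank_fin_fun] at this
  omega

theorem SimpleGraph.IsTree.card_set_edgeSet {V : Type*} [Fintype V] {T : SimpleGraph V}
    (hT : T.IsTree) : Nat.card (Set T.edgeSet) = 2 ^ (Fintype.card V - 1) := by
  classical
  rw [Nat.card_eq_fintype_card, Fintype.card_set, ← SimpleGraph.edgeFinset_card,
    ← hT.card_edgeFinset, Nat.add_sub_cancel]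

theorem stmt12_general {N : ℕ} (G : SimpleGraph (Fin N))
    (F : Set (Fin N → ℝ)) (hF : IsFacet G F) :
    {F' : Set (Fin N → ℝ) | IsFacet G F' ∧ faceGraph F' = faceGraph F}.Finite ∧
    {F' : Set (Fin N → ℝ) | IsFacet G F' ∧ faceGraph F' = faceGraph F}.ncard ≤ 2^(N-1) := by
  set S := {F' : Set (Fin N → ℝ) | IsFacet G F' ∧ faceGraph F' = faceGraph F}
  rcases F.eq_empty_or_nonempty with rfl | hne
  · have hS : S ⊆ {∅} := fun F' ⟨hF', hgraph⟩ => by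
      rw [Set.mem_singleton_iff, ← faceGraph_eq_bot_iff hF'.1.subset_nabla, hgraph,
        faceGraph_eq_bot_iff (G := G) (Set.empty_subset _)]
    exact ⟨(Set.finite_singleton ∅).subset hS,
      (Set.ncard_le_ncard hS).trans (by simp [Nat.one_le_two_pow])⟩
  · obtain ⟨v, -, -, -⟩ := hF.1.subset_nabla hne.some_mem
    have : Nonempty (Fin N) := ⟨v⟩
    obtain ⟨T, hTle, hT⟩ :=
      SimpleGraph.Connected.exists_isTree_le ⟨hF.faceGraph_preconnected hne⟩
    let orientation (F' : Set (Fin N → ℝ)) : Set T.edgeSet :=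
      {e | stdBasis e.1.out.1 - stdBasis e.1.out.2 ∈ F'}
    have hinj : S.InjOn orientation := fun F₁ ⟨h₁, hg₁⟩ F₂ ⟨h₂, hg₂⟩ h =>
      h₁.1.eq_of_forall_out_mem_iff h₂.1 (hg₁.trans hg₂.symm) hT.connected.preconnected
        (hg₁ ▸ hTle) fun e he => Set.ext_iff.1 h ⟨e, he⟩
    refine ⟨.of_finite_image (Set.toFinite _) hinj, ?_⟩
    calc S.ncard = (orientation '' S).ncard := hinj.ncard_image.symm
      _ ≤ Nat.card (Set T.edgeSet) := Set.ncard_le_card _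
      _ = 2 ^ (N - 1) := by rw [hT.card_set_edgeSet, Fintype.card_fin]

theorem stmt12 {N : ℕ} (G : SimpleGraph (Fin N)) (hG : G.Connected)
    (F : Set (Fin N → ℝ)) (hF : IsFacet G F) :
    {F' : Set (Fin N → ℝ) | IsFacet G F' ∧ faceGraph F' = faceGraph F}.Finite ∧
    {F' : Set (Fin N → ℝ) | IsFacet G F' ∧ faceGraph F' = faceGraph F}.ncard ≤ 2^(N-1) :=
  stmt12_general G F hF
end
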